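/- Let a > 0, b_1,...,b_N > 0, α > 0. Suppose m ∈ (0,1)^N with ∑ m_j = 1 satisfies (N-1)·b_k/(a + (N-1)·∑_j m_j b_j) = α(N-1)/(N·m_k) + λ for all k and some common λ ∈ ℝ. Then for any k, l: if b_k > b_l then m_k < m_l. -/

import Mathlib

/-!
Subtracting the stationarity equations for `k` and `l` gives
`C (b k - b l) = β (1 / m k - 1 / m l)` with `C, β > 0`, so a larger similarity forces a larger
reciprocal weight, i.e. a smaller weight.
-/

theorem lt_of_mul_eq_div_add {c β lam x x' y y' : ℝ} (hc : 0 < c) (hβ : 0 < β)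
    (hy : 0 < y) (hy' : 0 < y') (hx : c * x = β / y + lam) (hx' : c * x' = β / y' + lam)
    (hlt : x' < x) : y < y' := by
  have hcx : c * x' < c * x := mul_lt_mul_of_pos_left hlt hc
  exact (div_lt_div_iff_of_pos_left hβ hy' hy).mp (by linarith)

theorem stationarity_implies_inverse_order_general (N : ℕ) (hN : 2 ≤ N)
    (a : ℝ) (ha : 0 < a) (b : Fin N → ℝ) (hb : ∀ j, 0 < b j) (α : ℝ) (hα : 0 < α)
    (m : Fin N → ℝ) (hm0 : ∀ j, 0 < m j)
    (lam : ℝ)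
    (hstat : ∀ k, ((N : ℝ) - 1) * b k / (a + ((N : ℝ) - 1) * ∑ j, m j * b j)
        = α * ((N : ℝ) - 1) / ((N : ℝ) * m k) + lam) :
    ∀ k l, b k > b l → m k < m l := by
  intro k l hkl
  have hN1 : (0 : ℝ) < (N : ℝ) - 1 := by
    have : (2 : ℝ) ≤ N := by exact_mod_cast hN
    linarith
  set D := a + ((N : ℝ) - 1) * ∑ j, m j * b j
  have hD : 0 < D := by
    have : 0 ≤ ∑ j, m j * b j := Finset.sum_nonneg fun j _ => (mul_pos (hm0 j) (hb j)).le
    positivity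
  have hstat' : ∀ j, ((N : ℝ) - 1) / D * b j = α * ((N : ℝ) - 1) / N / m j + lam := fun j => by
    rw [div_mul_eq_mul_div, div_div]
    exact hstat j
  exact lt_of_mul_eq_div_add (by positivity) (by positivity) (hm0 k) (hm0 l)
    (hstat' k) (hstat' l) hkl

/-- Consequence of the stationarity condition: the optimal negative weight m_k is
inversely ordered with the similarity b_k. -/
theorem stationarity_implies_inverse_order (N : ℕ) (hN : 2 ≤ N)
    (a : ℝ) (ha : 0 < a) (b : Fin N → ℝ) (hb : ∀ j, 0 < b j) (α : ℝ) (hα : 0 < α)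
    (m : Fin N → ℝ) (hm0 : ∀ j, 0 < m j) (hm1 : ∀ j, m j < 1) (hmsum : (∑ j, m j) = 1)
    (lam : ℝ)
    (hstat : ∀ k, ((N : ℝ) - 1) * b k / (a + ((N : ℝ) - 1) * ∑ j, m j * b j)
        = α * ((N : ℝ) - 1) / ((N : ℝ) * m k) + lam) :
    ∀ k l, b k > b l → m k < m l :=
  stationarity_implies_inverse_order_general N hN a ha b hb α hα m hm0 lam hstat
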